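/- For every integer n ≥ 5, the cardinalities of E_{n−3} and E_{n−2} are equal, and both equal 3·(n−2)! − 2·(n−3)!. -/
import Mathlib


/-- `H_k ⊂ Σ_n`: permutations `σ` with `σ(1) ≠ 1` and `σ(i) = i` for all
`i ∈ [k+1, n]` (0-indexed: `σ 0 ≠ 0` and `σ i = i` for all `i` with `k ≤ i`). -/
def Hfam (n k : ℕ) : Finset (Equiv.Perm (Fin n)) :=
  Finset.univ.filter fun σ =>
    (∀ i : Fin n, i.val = 0 → σ i ≠ i) ∧ ∀ i : Fin n, k ≤ i.val → σ i = i

/-- `N(H_k)`: permutations `π` with `π(1) = 1` intersecting every member of `H_k`. -/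
def Nfam (n k : ℕ) : Finset (Equiv.Perm (Fin n)) :=
  Finset.univ.filter fun π =>
    (∀ i : Fin n, i.val = 0 → π i = i) ∧ ∀ σ ∈ Hfam n k, ∃ i, π i = σ i

/-- `E_k = H_k ∪ N(H_k)`. -/
def Efam (n k : ℕ) : Finset (Equiv.Perm (Fin n)) := Hfam n k ∪ Nfam n k

open Finset Equiv in
lemma fixCard {n : ℕ} (S : Finset (Fin n)) :
    (Finset.univ.filter fun π : Equiv.Perm (Fin n) => ∀ i ∈ S, π i = i).card
      = Nat.factorial (n - S.card) := by
  rw [← Fintype.card_subtype]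
  have e1 := Equiv.Perm.subtypeEquivSubtypePerm (fun x : Fin n => x ∉ S)
  have e2 : {f : Equiv.Perm (Fin n) // ∀ a, ¬ (a ∉ S) → f a = a}
      ≃ {f : Equiv.Perm (Fin n) // ∀ i ∈ S, f i = i} :=
    Equiv.subtypeEquivRight (by intro f; simp)
  rw [← Fintype.card_congr (e1.trans e2), Fintype.card_perm]
  congr 1
  rw [Fintype.card_subtype]
  simp [Finset.filter_not, Finset.filter_mem_eq_inter]
  rw [Finset.card_sdiff_of_subset (Finset.subset_univ S), Finset.card_univ, Fintype.card_fin]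

lemma exists_avoider {n k : ℕ} (hk2 : 2 ≤ k) (hkn : k ≤ n) (π : Equiv.Perm (Fin n))
    (h0 : π ⟨0, by omega⟩ = ⟨0, by omega⟩) (hfix : ∀ i : Fin n, k ≤ i.val → π i ≠ i) :
    ∃ σ ∈ Hfam n k, ∀ i, π i ≠ σ i := by
  classical
  have hπ0 : ∀ x : Fin n, π x = ⟨0, by omega⟩ → x = ⟨0, by omega⟩ := by
    intro x hx
    have := π.injective (hx.trans h0.symm)
    exact this
  -- target sets for Hall
  set t : Fin k → Finset (Fin k) := fun i =>
    if h : ((π (Fin.castLE hkn i)) : ℕ) < k then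
      Finset.univ.erase ⟨(π (Fin.castLE hkn i)).val, h⟩ else Finset.univ with ht
  have hcard_t : ∀ i, k - 1 ≤ (t i).card := by
    intro i
    simp only [ht]
    split
    · rw [Finset.card_erase_of_mem (Finset.mem_univ _), Finset.card_univ, Fintype.card_fin]
    · rw [Finset.card_univ, Fintype.card_fin]; omega
  have hall : ∀ S : Finset (Fin k), S.card ≤ (S.biUnion t).card := by
    intro S
    rcases S.eq_empty_or_nonempty with rfl | ⟨i, hi⟩
    · simp
    have hsub : t i ⊆ S.biUnion t := Finset.subset_biUnion_of_mem t hi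
    have h1 : k - 1 ≤ (S.biUnion t).card := le_trans (hcard_t i) (Finset.card_le_card hsub)
    rcases le_or_gt S.card (k - 1) with h | h
    · omega
    · -- S.card = k, show biUnion = univ
      have hSu : S = Finset.univ := by
        apply Finset.eq_univ_of_card
        have := Finset.card_le_univ S
        simp only [Finset.card_univ, Fintype.card_fin] at this ⊢
        omega
      have : S.biUnion t = Finset.univ := by
        apply Finset.eq_univ_of_forall
        intro v
        rw [hSu]
        by_cases hv : v = (⟨0, by omega⟩ : Fin k)
        · -- use position 1
          apply Finset.mem_biUnion.2 ⟨⟨1, by omega⟩, Finset.mem_univ _, ?_⟩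
          simp only [ht]
          split
          · next hlt =>
            refine Finset.mem_erase.2 ⟨?_, Finset.mem_univ _⟩
            intro hveq
            have : (π (Fin.castLE hkn ⟨1, by omega⟩)).val = 0 :=
              (congrArg Fin.val (hveq.symm.trans hv)).symm ▸ congrArg Fin.val (hveq.symm.trans hv)
            have hπ1 : π (Fin.castLE hkn ⟨1, by omega⟩) = ⟨0, by omega⟩ := Fin.ext this
            have := hπ0 _ hπ1
            have : (1 : ℕ) = 0 := congrArg Fin.val this
            omega
          · exact Finset.mem_univ _
        · apply Finset.mem_biUnion.2 ⟨⟨0, by omega⟩, Finset.mem_univ _, ?_⟩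
          have hc : Fin.castLE hkn (⟨0, by omega⟩ : Fin k) = (⟨0, by omega⟩ : Fin n) := rfl
          simp only [ht, hc, h0]
          split
          · refine Finset.mem_erase.2 ⟨?_, Finset.mem_univ _⟩
            intro hveq
            exact hv (by rw [hveq])
          · exact Finset.mem_univ _
      rw [this, Finset.card_univ, Fintype.card_fin]
      have := Finset.card_le_univ S
      simp only [Finset.card_univ, Fintype.card_fin] at this
      omega
  obtain ⟨σ', hinj, hmem⟩ := (Finset.all_card_le_biUnion_card_iff_exists_injective t).1 hall
  have hbij : Function.Bijective σ' := (Finite.injective_iff_bijective).1 hinj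
  set σe : Equiv.Perm (Fin k) := Equiv.ofBijective σ' hbij with hσe
  set f : Fin k ≃ {x : Fin n // x.val < k} :=
    { toFun := fun j => ⟨Fin.castLE hkn j, j.2⟩
      invFun := fun x => ⟨x.1.val, x.2⟩
      left_inv := fun j => rfl
      right_inv := fun x => rfl } with hf
  set σ : Equiv.Perm (Fin n) := σe.extendDomain f with hσ
  have happly : ∀ (i : Fin n) (hi : i.val < k),
      σ i = Fin.castLE hkn (σ' ⟨i.val, hi⟩) := by
    intro i hi
    rw [hσ, Equiv.Perm.extendDomain_apply_subtype σe f hi]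
    rfl
  have hfixσ : ∀ i : Fin n, k ≤ i.val → σ i = i := by
    intro i hi
    rw [hσ, Equiv.Perm.extendDomain_apply_not_subtype σe f (by omega)]
  -- fact: σ' i avoids forbidden value
  have havoid : ∀ (i : Fin k), ((π (Fin.castLE hkn i)) : ℕ) < k →
      (σ' i).val ≠ (π (Fin.castLE hkn i)).val := by
    intro i hlt
    have := hmem i
    simp only [ht] at this
    rw [dif_pos hlt] at this
    intro hveq
    exact (Finset.mem_erase.1 this).1 (Fin.ext hveq)
  refine ⟨σ, ?_, ?_⟩
  · rw [Hfam, Finset.mem_filter]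
    refine ⟨Finset.mem_univ _, ?_, hfixσ⟩
    intro i hival
    have hik : i.val < k := by omega
    rw [happly i hik]
    intro heq
    have hveq : (σ' ⟨i.val, hik⟩).val = i.val := congrArg Fin.val heq
    have hcast : Fin.castLE hkn (⟨i.val, hik⟩ : Fin k) = i := Fin.ext rfl
    have hieq : i = (⟨0, by omega⟩ : Fin n) := Fin.ext hival
    have hpi0 : (π i).val = 0 := by rw [hieq, h0]
    have hforb : ((π (Fin.castLE hkn ⟨i.val, hik⟩)) : ℕ) < k := by
      rw [hcast]; omega
    have hav := havoid ⟨i.val, hik⟩ hforb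
    rw [hcast] at hav
    exact hav (by rw [hveq, hival, hpi0])
  · intro i
    rcases lt_or_ge i.val k with hik | hik
    · rw [happly i hik]
      have hcast : Fin.castLE hkn (⟨i.val, hik⟩ : Fin k) = i := Fin.ext rfl
      rcases lt_or_ge (π i : ℕ) k with hπk | hπk
      · have := havoid ⟨i.val, hik⟩ (by rw [hcast]; exact hπk)
        rw [hcast] at this
        intro heq
        exact this (by rw [heq]; rfl)
      · intro heq
        have : (π i).val < k := by
          rw [heq]
          exact (σ' ⟨i.val, hik⟩).2
        omega
    · rw [hfixσ i hik]
      exact hfix i hik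

lemma Nfam_eq {n k : ℕ} (hk2 : 2 ≤ k) (hkn : k ≤ n) :
    Nfam n k = Finset.univ.filter fun π : Equiv.Perm (Fin n) =>
      (∀ i : Fin n, i.val = 0 → π i = i) ∧ ∃ i : Fin n, k ≤ i.val ∧ π i = i := by
  ext π
  simp only [Nfam, Finset.mem_filter, Finset.mem_univ, true_and]
  constructor
  · rintro ⟨h1, h2⟩
    refine ⟨h1, ?_⟩
    by_contra hno
    push_neg at hno
    obtain ⟨σ, hσH, hav⟩ := exists_avoider hk2 hkn π (h1 ⟨0, by omega⟩ rfl) hno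
    obtain ⟨i, hi⟩ := h2 σ hσH
    exact hav i hi
  · rintro ⟨h1, i, hik, hfix⟩
    refine ⟨h1, fun σ hσ => ⟨i, ?_⟩⟩
    rw [Hfam, Finset.mem_filter] at hσ
    rw [hfix, hσ.2.2 i hik]

lemma H_card_aux {n k : ℕ} (hk : 1 ≤ k) (hkn : k ≤ n) (S : Finset (Fin n))
    (hS : ∀ i : Fin n, k ≤ i.val ↔ i ∈ S) :
    (Hfam n k).card + Nat.factorial (n - (S.card + 1)) = Nat.factorial (n - S.card) := by
  have hn : 0 < n := by omega
  set z : Fin n := ⟨0, hn⟩ with hz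
  have hzS : z ∉ S := fun h => by have := (hS z).2 h; simp [hz] at this; omega
  set F : Finset (Equiv.Perm (Fin n)) := Finset.univ.filter fun σ => ∀ i ∈ S, σ i = i with hF
  have h1 : Hfam n k = F.filter fun σ => ¬ (σ z = z) := by
    ext σ
    simp only [Hfam, hF, Finset.mem_filter, Finset.mem_univ, true_and, Finset.filter_filter]
    constructor
    · rintro ⟨ha, hb⟩
      exact ⟨fun i hiS => hb i ((hS i).2 hiS), fun h => ha z rfl h⟩
    · rintro ⟨hfixS, hzne⟩
      refine ⟨fun i h0 => ?_, fun i hik => hfixS i ((hS i).1 hik)⟩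
      have : i = z := Fin.ext h0
      rw [this]; exact hzne
  have h2 : F.filter (fun σ => σ z = z)
      = Finset.univ.filter fun σ : Equiv.Perm (Fin n) => ∀ i ∈ insert z S, σ i = i := by
    ext σ
    simp only [hF, Finset.mem_filter, Finset.mem_univ, true_and, Finset.filter_filter,
      Finset.forall_mem_insert]
    tauto
  have h3 := Finset.card_filter_add_card_filter_not (s := F) (p := fun σ => σ z = z)
  rw [h2, fixCard] at h3
  rw [Finset.card_insert_of_notMem hzS] at h3
  rw [h1]
  have h4 : F.card = Nat.factorial (n - S.card) := fixCard S
  omega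

set_option maxHeartbeats 2000000 in
theorem card_Efam_top (n : ℕ) (hn : 5 ≤ n) :
    (Efam n (n - 3)).card = (Efam n (n - 2)).card ∧
    ((Efam n (n - 3)).card : ℤ) =
      3 * (Nat.factorial (n - 2) : ℤ) - 2 * (Nat.factorial (n - 3) : ℤ) := by
  have hn0 : 0 < n := by omega
  obtain ⟨z, hzv⟩ : ∃ a : Fin n, a.val = 0 := ⟨⟨0, by omega⟩, rfl⟩
  obtain ⟨a1, ha1v⟩ : ∃ a : Fin n, a.val = n - 1 := ⟨⟨n - 1, by omega⟩, rfl⟩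
  obtain ⟨a2, ha2v⟩ : ∃ a : Fin n, a.val = n - 2 := ⟨⟨n - 2, by omega⟩, rfl⟩
  obtain ⟨a3, ha3v⟩ : ∃ a : Fin n, a.val = n - 3 := ⟨⟨n - 3, by omega⟩, rfl⟩
  -- pairwise distinct
  have hza1 : z ≠ a1 := fun h => by have := congrArg Fin.val h; omega
  have hza2 : z ≠ a2 := fun h => by have := congrArg Fin.val h; omega
  have hza3 : z ≠ a3 := fun h => by have := congrArg Fin.val h; omega
  have h12 : a2 ≠ a1 := fun h => by have := congrArg Fin.val h; omega
  have h32 : a3 ≠ a2 := fun h => by have := congrArg Fin.val h; omega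
  have h31 : a3 ≠ a1 := fun h => by have := congrArg Fin.val h; omega
  -- fix-sets
  obtain ⟨U1, hU1⟩ : ∃ U : Finset (Equiv.Perm (Fin n)),
      U = Finset.univ.filter (fun π => ∀ i ∈ ({z, a3} : Finset (Fin n)), π i = i) := ⟨_, rfl⟩
  obtain ⟨U2, hU2⟩ : ∃ U : Finset (Equiv.Perm (Fin n)),
      U = Finset.univ.filter (fun π => ∀ i ∈ ({z, a2} : Finset (Fin n)), π i = i) := ⟨_, rfl⟩
  obtain ⟨U3, hU3⟩ : ∃ U : Finset (Equiv.Perm (Fin n)),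
      U = Finset.univ.filter (fun π => ∀ i ∈ ({z, a1} : Finset (Fin n)), π i = i) := ⟨_, rfl⟩
  -- cards of fix-sets
  have hc1 : ({z, a3} : Finset (Fin n)).card = 2 := by
    rw [Finset.card_insert_of_notMem (by simp [hza3]), Finset.card_singleton]
  have cU1 : U1.card = Nat.factorial (n - 2) := by
    rw [hU1, fixCard, hc1]
  have hc2 : ({z, a2} : Finset (Fin n)).card = 2 := by
    rw [Finset.card_insert_of_notMem (by simp [hza2]), Finset.card_singleton]
  have cU2 : U2.card = Nat.factorial (n - 2) := by
    rw [hU2, fixCard, hc2]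
  have hc3 : ({z, a1} : Finset (Fin n)).card = 2 := by
    rw [Finset.card_insert_of_notMem (by simp [hza1]), Finset.card_singleton]
  have cU3 : U3.card = Nat.factorial (n - 2) := by
    rw [hU3, fixCard, hc3]
  -- pair intersections
  have hI12 : U1 ∩ U2 = Finset.univ.filter
      (fun π : Equiv.Perm (Fin n) => ∀ i ∈ ({z, a3, a2} : Finset (Fin n)), π i = i) := by
    ext π
    simp only [hU1, hU2, Finset.mem_inter, Finset.mem_filter, Finset.mem_univ, true_and,
      Finset.forall_mem_insert, Finset.mem_singleton, forall_eq]
    tauto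
  have hI13 : U1 ∩ U3 = Finset.univ.filter
      (fun π : Equiv.Perm (Fin n) => ∀ i ∈ ({z, a3, a1} : Finset (Fin n)), π i = i) := by
    ext π
    simp only [hU1, hU3, Finset.mem_inter, Finset.mem_filter, Finset.mem_univ, true_and,
      Finset.forall_mem_insert, Finset.mem_singleton, forall_eq]
    tauto
  have hI23 : U2 ∩ U3 = Finset.univ.filter
      (fun π : Equiv.Perm (Fin n) => ∀ i ∈ ({z, a2, a1} : Finset (Fin n)), π i = i) := by
    ext π
    simp only [hU2, hU3, Finset.mem_inter, Finset.mem_filter, Finset.mem_univ, true_and,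
      Finset.forall_mem_insert, Finset.mem_singleton, forall_eq]
    tauto
  have card3 : ∀ (x y w : Fin n), x ≠ y → x ≠ w → y ≠ w →
      ({x, y, w} : Finset (Fin n)).card = 3 := by
    intro x y w hxy hxw hyw
    rw [Finset.card_insert_of_notMem (by simp [hxy, hxw]),
      Finset.card_insert_of_notMem (by simp [hyw]), Finset.card_singleton]
  have hc12 : ({z, a3, a2} : Finset (Fin n)).card = 3 := card3 z a3 a2 hza3 hza2 h32
  have hc13 : ({z, a3, a1} : Finset (Fin n)).card = 3 := card3 z a3 a1 hza3 hza1 h31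
  have hc23 : ({z, a2, a1} : Finset (Fin n)).card = 3 := card3 z a2 a1 hza2 hza1 h12
  have cI12 : (U1 ∩ U2).card = Nat.factorial (n - 3) := by
    rw [hI12, fixCard, hc12]
  have cI13 : (U1 ∩ U3).card = Nat.factorial (n - 3) := by
    rw [hI13, fixCard, hc13]
  have cI23 : (U2 ∩ U3).card = Nat.factorial (n - 3) := by
    rw [hI23, fixCard, hc23]
  -- triple intersection
  have hI123 : (U1 ∩ U3) ∩ (U2 ∩ U3) = Finset.univ.filter
      (fun π : Equiv.Perm (Fin n) => ∀ i ∈ ({z, a3, a2, a1} : Finset (Fin n)), π i = i) := by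
    ext π
    simp only [hU1, hU2, hU3, Finset.mem_inter, Finset.mem_filter, Finset.mem_univ, true_and,
      Finset.forall_mem_insert, Finset.mem_singleton, forall_eq]
    tauto
  have hc1234 : ({z, a3, a2, a1} : Finset (Fin n)).card = 4 := by
    rw [Finset.card_insert_of_notMem (by simp [hza3, hza2, hza1]), card3 a3 a2 a1 h32 h31 h12]
  have cI123 : ((U1 ∩ U3) ∩ (U2 ∩ U3)).card = Nat.factorial (n - 4) := by
    rw [hI123, fixCard, hc1234]
  -- N families as unions
  have hN2 : Nfam n (n - 2) = U2 ∪ U3 := by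
    rw [Nfam_eq (by omega) (by omega)]
    ext π
    simp only [hU2, hU3, Finset.mem_union, Finset.mem_filter, Finset.mem_univ, true_and,
      Finset.forall_mem_insert, Finset.mem_singleton, forall_eq]
    constructor
    · rintro ⟨h1, i, hik, hfix⟩
      have hz' : π z = z := h1 z hzv
      have hlt := i.isLt
      have : i = a2 ∨ i = a1 := by
        rcases Nat.lt_or_ge i.val (n - 1) with h | h
        · left; exact Fin.ext (by omega)
        · right; exact Fin.ext (by omega)
      rcases this with rfl | rfl
      · exact Or.inl ⟨hz', hfix⟩
      · exact Or.inr ⟨hz', hfix⟩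
    · rintro (⟨hz', hfix⟩ | ⟨hz', hfix⟩)
      · exact ⟨fun i h0 => by rw [show i = z from Fin.ext (by omega)]; exact hz',
          ⟨a2, by omega, hfix⟩⟩
      · exact ⟨fun i h0 => by rw [show i = z from Fin.ext (by omega)]; exact hz',
          ⟨a1, by omega, hfix⟩⟩
  have hN3 : Nfam n (n - 3) = U1 ∪ U2 ∪ U3 := by
    rw [Nfam_eq (by omega) (by omega)]
    ext π
    simp only [hU1, hU2, hU3, Finset.mem_union, Finset.mem_filter, Finset.mem_univ, true_and,
      Finset.forall_mem_insert, Finset.mem_singleton, forall_eq]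
    constructor
    · rintro ⟨h1, i, hik, hfix⟩
      have hz' : π z = z := h1 z hzv
      have hlt := i.isLt
      have : i = a3 ∨ i = a2 ∨ i = a1 := by
        rcases Nat.lt_or_ge i.val (n - 2) with h | h
        · left; exact Fin.ext (by omega)
        · rcases Nat.lt_or_ge i.val (n - 1) with h' | h'
          · right; left; exact Fin.ext (by omega)
          · right; right; exact Fin.ext (by omega)
      rcases this with rfl | rfl | rfl
      · exact Or.inl (Or.inl ⟨hz', hfix⟩)
      · exact Or.inl (Or.inr ⟨hz', hfix⟩)
      · exact Or.inr ⟨hz', hfix⟩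
    · rintro ((⟨hz', hfix⟩ | ⟨hz', hfix⟩) | ⟨hz', hfix⟩)
      · exact ⟨fun i h0 => by rw [show i = z from Fin.ext (by omega)]; exact hz',
          ⟨a3, by omega, hfix⟩⟩
      · exact ⟨fun i h0 => by rw [show i = z from Fin.ext (by omega)]; exact hz',
          ⟨a2, by omega, hfix⟩⟩
      · exact ⟨fun i h0 => by rw [show i = z from Fin.ext (by omega)]; exact hz',
          ⟨a1, by omega, hfix⟩⟩
  -- cards of the N families
  have e1 : (U2 ∪ U3).card + (U2 ∩ U3).card = U2.card + U3.card :=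
    Finset.card_union_add_card_inter U2 U3
  have e2 : (U1 ∪ U2).card + (U1 ∩ U2).card = U1.card + U2.card :=
    Finset.card_union_add_card_inter U1 U2
  have e3 : (U1 ∪ U2 ∪ U3).card + ((U1 ∪ U2) ∩ U3).card = (U1 ∪ U2).card + U3.card :=
    Finset.card_union_add_card_inter (U1 ∪ U2) U3
  have e4 : ((U1 ∩ U3) ∪ (U2 ∩ U3)).card + ((U1 ∩ U3) ∩ (U2 ∩ U3)).card
      = (U1 ∩ U3).card + (U2 ∩ U3).card :=
    Finset.card_union_add_card_inter _ _
  have hdist : (U1 ∪ U2) ∩ U3 = (U1 ∩ U3) ∪ (U2 ∩ U3) := Finset.union_inter_distrib_right ..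
  -- H cards
  have cH2 : (Hfam n (n - 2)).card + Nat.factorial (n - 3) = Nat.factorial (n - 2) := by
    have := H_card_aux (k := n - 2) (by omega) (by omega) ({a2, a1} : Finset (Fin n))
      (by intro i
          have := i.isLt
          simp only [Finset.mem_insert, Finset.mem_singleton, Fin.ext_iff]
          omega)
    rw [Finset.card_insert_of_notMem (by simp [h12]), Finset.card_singleton,
      show n - (2 + 1) = n - 3 from by omega] at this
    exact this
  have cH3 : (Hfam n (n - 3)).card + Nat.factorial (n - 4) = Nat.factorial (n - 3) := by
    have := H_card_aux (k := n - 3) (by omega) (by omega) ({a3, a2, a1} : Finset (Fin n))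
      (by intro i
          have := i.isLt
          simp only [Finset.mem_insert, Finset.mem_singleton, Fin.ext_iff]
          omega)
    rw [card3 a3 a2 a1 h32 h31 h12, show n - (3 + 1) = n - 4 from by omega] at this
    exact this
  -- disjointness and E cards
  have hdisj : ∀ k, 2 ≤ k → k ≤ n → Disjoint (Hfam n k) (Nfam n k) := by
    intro k hk2 hkn
    rw [Finset.disjoint_left]
    intro σ hσH hσN
    rw [Hfam, Finset.mem_filter] at hσH
    rw [Nfam, Finset.mem_filter] at hσN
    exact hσH.2.1 z hzv (hσN.2.1 z hzv)
  have cE2 : (Efam n (n - 2)).card = (Hfam n (n - 2)).card + (Nfam n (n - 2)).card := by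
    rw [Efam, Finset.card_union_of_disjoint (hdisj _ (by omega) (by omega))]
  have cE3 : (Efam n (n - 3)).card = (Hfam n (n - 3)).card + (Nfam n (n - 3)).card := by
    rw [Efam, Finset.card_union_of_disjoint (hdisj _ (by omega) (by omega))]
  rw [hN2] at cE2
  rw [hN3] at cE3
  rw [hdist] at e3
  rw [cU2, cU3, cI23] at e1
  rw [cU1, cU2, cI12] at e2
  rw [cU3] at e3
  rw [cI13, cI23, cI123] at e4
  -- final arithmetic
  have key3 : ((Efam n (n - 3)).card : ℤ)
      = 3 * (Nat.factorial (n - 2) : ℤ) - 2 * (Nat.factorial (n - 3) : ℤ) := by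
    have zE := congrArg (Nat.cast : ℕ → ℤ) cE3
    have z2 := congrArg (Nat.cast : ℕ → ℤ) e2
    have z3 := congrArg (Nat.cast : ℕ → ℤ) e3
    have z4 := congrArg (Nat.cast : ℕ → ℤ) e4
    have zH := congrArg (Nat.cast : ℕ → ℤ) cH3
    push_cast at zE z2 z3 z4 zH
    linarith
  have key2 : ((Efam n (n - 2)).card : ℤ)
      = 3 * (Nat.factorial (n - 2) : ℤ) - 2 * (Nat.factorial (n - 3) : ℤ) := by
    have zE := congrArg (Nat.cast : ℕ → ℤ) cE2
    have z1 := congrArg (Nat.cast : ℕ → ℤ) e1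
    have zH := congrArg (Nat.cast : ℕ → ℤ) cH2
    push_cast at zE z1 zH
    linarith
  refine ⟨?_, key3⟩
  have : ((Efam n (n - 3)).card : ℤ) = ((Efam n (n - 2)).card : ℤ) := key3.trans key2.symm
  exact_mod_cast this
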